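/- Let ℚ be the law of a stationary process (Y_n)_{n≥1} with Y_1 ~ Q and n-dimensional marginals Q_n, satisfying the mixing condition C^{−1}ℚ(A)ℚ(B) ≤ ℚ(A∩B) ≤ Cℚ(A)ℚ(B) for some 1 ≤ C < ∞, all n, all A ∈ σ(Y_1^n) and B ∈ σ(Y_{n+1}^∞). Then for every x_1^n ∈ S^n, the essential infimum of ρ_n(x_1^n, Y_1^n) under Q_n equals (1/n) Σ_{k=1}^n ρ_Q(x_k). -/

import Mathlib

open MeasureTheory Filter Set Topology Classical
open scoped ENNReal NNReal

noncomputable section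

/-- `-log t` as a value in `ℝ≥0∞` (equal to `∞` when `t = 0`); intended for `t ≤ 1`. -/
def negLog (t : ℝ≥0∞) : ℝ≥0∞ :=
  if t = 0 then ∞ else ENNReal.ofReal (-Real.log t.toReal)

/-- `log t` as a value in `ℝ≥0∞` (equal to `∞` when `t = ∞`); intended for `t ≥ 1`. -/
def posLog (t : ℝ≥0∞) : ℝ≥0∞ :=
  if t = ∞ then ∞ else ENNReal.ofReal (Real.log t.toReal)

/-- The extended-real-valued logarithm of an `ℝ≥0∞` number. -/
def eLog (t : ℝ≥0∞) : EReal :=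
  if t = 0 then ⊥ else if t = ∞ then ⊤ else ((Real.log t.toReal : ℝ) : EReal)

/-- Relative entropy `H(μ‖ν)` (in nats), valued in `ℝ≥0∞`: it equals
`∫ log (dμ/dν) dμ` when `μ ≪ ν` (and `+∞` when this integral is not defined,
which for probability measures can only mean `+∞`), and `+∞` when `¬ μ ≪ ν`. -/
def relEnt {α : Type*} [MeasurableSpace α] (μ ν : Measure α) : ℝ≥0∞ :=
  if μ ≪ ν ∧ Integrable (llr μ ν) μ then ENNReal.ofReal (∫ x, llr μ ν x ∂μ) else ∞

/-- The set `W(P,D)` of couplings: probability measures on `S × T` with first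
marginal `P` and expected distortion at most `D`. -/
def distSet {S T : Type*} [MeasurableSpace S] [MeasurableSpace T]
    (ρ : S × T → ℝ) (P : Measure S) (D : ℝ) : Set (Measure (S × T)) :=
  {W | IsProbabilityMeasure W ∧ W.map Prod.fst = P ∧
    ((∫⁻ z, ENNReal.ofReal (ρ z) ∂W : ℝ≥0∞) : EReal) ≤ ((D : ℝ) : EReal)}

/-- The rate function `R(P,Q,D) = inf_{W ∈ W(P,D)} H(W‖P×Q)` (equal to `+∞`
when `W(P,D)` is empty). -/
def Rrate {S T : Type*} [MeasurableSpace S] [MeasurableSpace T]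
    (ρ : S × T → ℝ) (P : Measure S) (Q : Measure T) (D : ℝ) : ℝ≥0∞ :=
  ⨅ W ∈ distSet ρ P D, relEnt W (P.prod Q)

/-- `Λ(P,Q,λ) = E_X[log E_Y e^{λρ(X,Y)}]`, valued in `EReal`.
For `λ ≥ 0` the integrand lies in `[0,∞]`; for `λ < 0` it lies in `[-∞,0]`. -/
def Lam {S T : Type*} [MeasurableSpace S] [MeasurableSpace T]
    (ρ : S × T → ℝ) (P : Measure S) (Q : Measure T) (l : ℝ) : EReal :=
  if 0 ≤ l then
    ((∫⁻ x, posLog (∫⁻ y, ENNReal.ofReal (Real.exp (l * ρ (x, y))) ∂Q) ∂P : ℝ≥0∞) : EReal)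
  else
    -(((∫⁻ x, negLog (∫⁻ y, ENNReal.ofReal (Real.exp (l * ρ (x, y))) ∂Q) ∂P : ℝ≥0∞) : EReal))

/-- The Fenchel–Legendre transform `Λ*(P,Q,D) = sup_{λ ≤ 0} [λD - Λ(P,Q,λ)]`. -/
def LamStar {S T : Type*} [MeasurableSpace S] [MeasurableSpace T]
    (ρ : S × T → ℝ) (P : Measure S) (Q : Measure T) (D : ℝ) : EReal :=
  ⨆ l ∈ Iic (0 : ℝ), (((l * D : ℝ) : EReal) - Lam ρ P Q l)

/-- `ρ_Q(x) := essinf_{Y ∼ Q} ρ(x,Y)`. -/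
def rhoQ {S T : Type*} [MeasurableSpace T]
    (ρ : S × T → ℝ) (Q : Measure T) (x : S) : ℝ :=
  essInf (fun y => ρ (x, y)) Q

/-- `D_min(P,Q) := inf {D : Λ*(P,Q,D) < ∞}`. -/
def DminPQ {S T : Type*} [MeasurableSpace S] [MeasurableSpace T]
    (ρ : S × T → ℝ) (P : Measure S) (Q : Measure T) : ℝ :=
  sInf {D : ℝ | LamStar ρ P Q D ≠ ⊤}

/-- `D_ave(P,Q) := E ρ(X,Y)` for independent `X ∼ P`, `Y ∼ Q`, valued in `ℝ≥0∞`. -/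
def DavePQ {S T : Type*} [MeasurableSpace S] [MeasurableSpace T]
    (ρ : S × T → ℝ) (P : Measure S) (Q : Measure T) : ℝ≥0∞ :=
  ∫⁻ z, ENNReal.ofReal (ρ z) ∂(P.prod Q)

/-- The candidate derivative `Λ'(λ)` of `Λ(P,Q,·)`. -/
def LamD {S T : Type*} [MeasurableSpace S] [MeasurableSpace T]
    (ρ : S × T → ℝ) (P : Measure S) (Q : Measure T) (l : ℝ) : ℝ :=
  ∫ x, (∫ y, ρ (x, y) * Real.exp (l * ρ (x, y)) ∂Q) /
    (∫ y, Real.exp (l * ρ (x, y)) ∂Q) ∂P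

/-- The left shift on sequences. -/
def shiftSeq {α : Type*} (x : ℕ → α) (n : ℕ) : α := x (n + 1)

/-- The single-letter distortion measure `ρ_n` on `n`-strings. -/
def rhoFin {S T : Type*} (ρ : S × T → ℝ) (n : ℕ) (x : Fin n → S) (y : Fin n → T) : ℝ :=
  (n : ℝ)⁻¹ * ∑ k, ρ (x k, y k)

/-- `L_n(x_1^n, Q^n, D) = -(1/n) log Q^n(B_n(x_1^n,D))`, valued in `ℝ≥0∞`,
for a memoryless (product) codebook distribution `Q^n`. -/
def LnIID {S T : Type*} [MeasurableSpace T]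
    (ρ : S × T → ℝ) (Q : Measure T) (D : ℝ) (n : ℕ) (x : ℕ → S) : ℝ≥0∞ :=
  (n : ℝ≥0∞)⁻¹ *
    negLog ((Measure.pi fun _ : Fin n => Q) {y | rhoFin ρ n (fun k => x k) y ≤ D})

/-- The empirical distribution `P_{x_1^n} = (1/n) ∑_{k=1}^n δ_{x_k}`. -/
def empMeas {S : Type*} [MeasurableSpace S] (n : ℕ) (x : ℕ → S) : Measure S :=
  (n : ℝ≥0∞)⁻¹ • ∑ k ∈ Finset.range n, Measure.dirac (x k)

/-- The `n`-dimensional marginal of a measure on sequences. -/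
def margN {α : Type*} [MeasurableSpace α] (μ : Measure (ℕ → α)) (n : ℕ) :
    Measure (Fin n → α) :=
  μ.map fun x (k : Fin n) => x (k : ℕ)

/-- The strong mixing condition `C⁻¹ 𝒬(A) 𝒬(B) ≤ 𝒬(A ∩ B) ≤ C 𝒬(A) 𝒬(B)` for all
`A ∈ σ(Y_1^n)`, `B ∈ σ(Y_{n+1}^∞)` and all `n`. -/
def Mixing {T : Type*} [MeasurableSpace T] (𝒬 : Measure (ℕ → T)) (C : ℝ) : Prop :=
  ∀ (n : ℕ) (A B : Set (ℕ → T)),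
    MeasurableSet[MeasurableSpace.comap (fun y (k : Fin n) => y (k : ℕ)) inferInstance] A →
    MeasurableSet[MeasurableSpace.comap (fun y (k : ℕ) => y (k + n)) inferInstance] B →
    (ENNReal.ofReal C)⁻¹ * (𝒬 A * 𝒬 B) ≤ 𝒬 (A ∩ B) ∧
      𝒬 (A ∩ B) ≤ ENNReal.ofReal C * (𝒬 A * 𝒬 B)

/-- `L_n(x_1^n, Q_n, D) = -(1/n) log Q_n(B_n(x_1^n,D))` where `Q_n` is the
`n`-dimensional marginal of the codebook process law `𝒬`. -/
def LnMem {S T : Type*} [MeasurableSpace T]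
    (ρ : S × T → ℝ) (𝒬 : Measure (ℕ → T)) (D : ℝ) (n : ℕ) (x : ℕ → S) : ℝ≥0∞ :=
  (n : ℝ≥0∞)⁻¹ * negLog (margN 𝒬 n {y | rhoFin ρ n (fun k => x k) y ≤ D})

/-- The set `W_n(P_n,D)` of couplings on `S^n × T^n`. -/
def distSetN {S T : Type*} [MeasurableSpace S] [MeasurableSpace T]
    (ρ : S × T → ℝ) (n : ℕ) (Pn : Measure (Fin n → S)) (D : ℝ) :
    Set (Measure ((Fin n → S) × (Fin n → T))) :=
  {W | IsProbabilityMeasure W ∧ W.map Prod.fst = Pn ∧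
    ((∫⁻ z, ENNReal.ofReal (rhoFin ρ n z.1 z.2) ∂W : ℝ≥0∞) : EReal) ≤ ((D : ℝ) : EReal)}

/-- `R_n(P_n,Q_n,D) = (1/n) inf_{W_n ∈ W_n(P_n,D)} H(W_n‖P_n×Q_n)`. -/
def RnMem {S T : Type*} [MeasurableSpace S] [MeasurableSpace T]
    (ρ : S × T → ℝ) (n : ℕ) (Pn : Measure (Fin n → S)) (Qn : Measure (Fin n → T))
    (D : ℝ) : ℝ≥0∞ :=
  (n : ℝ≥0∞)⁻¹ * ⨅ W ∈ distSetN ρ n Pn D, relEnt W (Pn.prod Qn)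

/-- `Λ_n(P_n,Q_n,λ) = E_{X_1^n}[log E_{Y_1^n} e^{λ ρ_n(X_1^n,Y_1^n)}]`. -/
def LamN {S T : Type*} [MeasurableSpace S] [MeasurableSpace T]
    (ρ : S × T → ℝ) (n : ℕ) (Pn : Measure (Fin n → S)) (Qn : Measure (Fin n → T))
    (l : ℝ) : EReal :=
  Lam (fun z => rhoFin ρ n z.1 z.2) Pn Qn l

/-- `Λ_n*(P_n,Q_n,D) = (1/n) sup_{λ ≤ 0} [λD - Λ_n(P_n,Q_n,λ)]`. -/
def LamStarN {S T : Type*} [MeasurableSpace S] [MeasurableSpace T]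
    (ρ : S × T → ℝ) (n : ℕ) (Pn : Measure (Fin n → S)) (Qn : Measure (Fin n → T))
    (D : ℝ) : EReal :=
  (((n : ℝ)⁻¹ : ℝ) : EReal) *
    ⨆ l ∈ Iic (0 : ℝ), (((l * D : ℝ) : EReal) - LamN ρ n Pn Qn l)

/-- One-sided Fenchel–Legendre transform `D ↦ sup_{λ ≤ 0} [λD - Λ(λ)]` of a
function `Λ : ℝ → EReal`. -/
def FLT (L : ℝ → EReal) (D : ℝ) : EReal :=
  ⨆ l ∈ Iic (0 : ℝ), (((l * D : ℝ) : EReal) - L l)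

/-!
Every coordinate of the stationary process has law `Q`, so almost surely
`ρ(x_k, Y_k) ≥ ρ_Q(x_k)` for all `k`, which gives the lower bound. Conversely, for `ε > 0`
each event `{ρ(x_k, Y_k) < ρ_Q(x_k) + ε}` has positive probability, and applying the lower
half of the mixing inequality to the first coordinate and the shifted tail, inductively,
bounds the probability of their intersection below by `C⁻ⁿ ∏ₖ Q(ρ(x_k, ·) < ρ_Q(x_k) + ε) > 0`.
On that event `ρ_n(x, Y) ≤ (1/n) ∑ₖ ρ_Q(x_k) + ε`.
-/

section EssInf

variable {α : Type*} [MeasurableSpace α] {μ : Measure α} [NeZero μ] {f : α → ℝ}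

theorem isCoboundedUnder_ge_ae (f : α → ℝ) : IsCoboundedUnder (· ≥ ·) (ae μ) f := by
  obtain ⟨m, hm⟩ : ∃ m : ℕ, ∃ᵐ x ∂μ, f x ≤ m := by
    by_contra! h
    have hgt : ∀ᵐ x ∂μ, ∀ m : ℕ, (m : ℝ) < f x := ae_all_iff.2 h
    obtain ⟨x, hx⟩ := hgt.exists
    obtain ⟨m, hm⟩ := exists_nat_ge (f x)
    exact (hx m).not_ge hm
  exact IsCoboundedUnder.of_frequently_le hm

theorem frequently_lt_of_essInf_lt {c : ℝ} (h : essInf f μ < c) : ∃ᵐ x ∂μ, f x < c :=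
  frequently_lt_of_liminf_lt (isCoboundedUnder_ge_ae f) h

end EssInf

section Stationary

variable {T : Type*} [MeasurableSpace T]

theorem map_eval_eq_map_eval_zero {𝒬 : Measure (ℕ → T)}
    (hstat : MeasurePreserving shiftSeq 𝒬 𝒬) (k : ℕ) :
    𝒬.map (fun y => y k) = 𝒬.map (fun y => y 0) := by
  induction k with
  | zero => rfl
  | succ k ih =>
    have hshift : Measurable (shiftSeq (α := T)) :=
      measurable_pi_lambda _ fun m => measurable_pi_apply (m + 1)
    calc 𝒬.map (fun y => y (k + 1)) = (𝒬.map shiftSeq).map (fun y => y k) :=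
          (Measure.map_map (measurable_pi_apply k) hshift).symm
      _ = 𝒬.map (fun y => y 0) := by rw [hstat.map_eq, ih]

theorem measurable_margN_proj {n : ℕ} :
    Measurable fun (y : ℕ → T) (k : Fin n) => y k :=
  measurable_pi_lambda _ fun _ => measurable_pi_apply _

theorem margN_map_eval (𝒬 : Measure (ℕ → T)) {n : ℕ} (k : Fin n) :
    (margN 𝒬 n).map (fun v => v k) = 𝒬.map (fun y => y k) :=
  Measure.map_map (measurable_pi_apply k) measurable_margN_proj

instance isProbabilityMeasure_margN (𝒬 : Measure (ℕ → T)) [IsProbabilityMeasure 𝒬] (n : ℕ) :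
    IsProbabilityMeasure (margN 𝒬 n) :=
  Measure.isProbabilityMeasure_map measurable_margN_proj.aemeasurable

theorem Mixing.inv_pow_mul_prod_le_margN_pi {𝒬 : Measure (ℕ → T)} [IsProbabilityMeasure 𝒬]
    {Q : Measure T} {C : ℝ} (hmix : Mixing 𝒬 C) (hstat : MeasurePreserving shiftSeq 𝒬 𝒬)
    (hQ : 𝒬.map (fun y => y 0) = Q) {n : ℕ} (A : Fin n → Set T)
    (hA : ∀ k, MeasurableSet (A k)) :
    (ENNReal.ofReal C)⁻¹ ^ n * ∏ k, Q (A k) ≤ margN 𝒬 n (univ.pi A) := by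
  induction n with
  | zero =>
    have hA_univ : univ.pi A = univ := eq_univ_of_forall fun _ k => k.elim0
    simp [hA_univ]
  | succ n ih =>
    set J := univ.pi fun k : Fin n => A k.succ
    set tail := (fun (y : ℕ → T) (k : Fin n) => y k) ⁻¹' J
    have hJ : MeasurableSet J := MeasurableSet.univ_pi fun k => hA k.succ
    have hsplit : (fun (y : ℕ → T) (k : Fin (n + 1)) => y k) ⁻¹' univ.pi A
        = {y | y 0 ∈ A 0} ∩ shiftSeq ⁻¹' tail := by
      ext y
      simp [tail, J, Fin.forall_fin_succ, shiftSeq]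
    have hhead : 𝒬 {y | y 0 ∈ A 0} = Q (A 0) := by
      rw [← hQ, Measure.map_apply (measurable_pi_apply 0) (hA 0)]
      rfl
    have htail : 𝒬 (shiftSeq ⁻¹' tail) = margN 𝒬 n J := by
      rw [hstat.measure_preimage (measurable_margN_proj hJ).nullMeasurableSet, margN,
        Measure.map_apply measurable_margN_proj hJ]
    have hmix1 : (ENNReal.ofReal C)⁻¹ * (𝒬 {y | y 0 ∈ A 0} * 𝒬 (shiftSeq ⁻¹' tail))
        ≤ 𝒬 ({y | y 0 ∈ A 0} ∩ shiftSeq ⁻¹' tail) :=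
      (hmix 1 _ _ ⟨{v | v 0 ∈ A 0}, measurable_pi_apply 0 (hA 0), rfl⟩
        ⟨_, measurable_margN_proj hJ, rfl⟩).1
    rw [margN, Measure.map_apply measurable_margN_proj (MeasurableSet.univ_pi hA), hsplit]
    calc (ENNReal.ofReal C)⁻¹ ^ (n + 1) * ∏ k, Q (A k)
        = (ENNReal.ofReal C)⁻¹ * (Q (A 0) *
            ((ENNReal.ofReal C)⁻¹ ^ n * ∏ k : Fin n, Q (A k.succ))) := by
          rw [Fin.prod_univ_succ, pow_succ]; ring
      _ ≤ (ENNReal.ofReal C)⁻¹ * (Q (A 0) * margN 𝒬 n J) := by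
          gcongr; exact ih _ fun k => hA k.succ
      _ ≤ _ := by rwa [hhead, htail] at hmix1

theorem Mixing.margN_pi_ne_zero {𝒬 : Measure (ℕ → T)} [IsProbabilityMeasure 𝒬]
    {Q : Measure T} {C : ℝ} (hmix : Mixing 𝒬 C) (hstat : MeasurePreserving shiftSeq 𝒬 𝒬)
    (hQ : 𝒬.map (fun y => y 0) = Q) {n : ℕ} (A : Fin n → Set T)
    (hA : ∀ k, MeasurableSet (A k)) (hQA : ∀ k, Q (A k) ≠ 0) :
    margN 𝒬 n (univ.pi A) ≠ 0 :=
  ne_bot_of_le_ne_bot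
    (mul_ne_zero (pow_ne_zero _ (ENNReal.inv_ne_zero.2 ENNReal.ofReal_ne_top))
      (Finset.prod_ne_zero_iff.2 fun k _ => hQA k))
    (hmix.inv_pow_mul_prod_le_margN_pi hstat hQ A hA)

end Stationary

section Distortion

variable {S T : Type*} (ρ : S × T → ℝ) {n : ℕ} {x : Fin n → S} {y : Fin n → T}

theorem rhoFin_nonneg (hρ0 : ∀ z, 0 ≤ ρ z) : 0 ≤ rhoFin ρ n x y :=
  mul_nonneg (by positivity) (Finset.sum_nonneg fun k _ => hρ0 _)

theorem le_rhoFin_of_le {r : Fin n → ℝ} (h : ∀ k, r k ≤ ρ (x k, y k)) :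
    (n : ℝ)⁻¹ * ∑ k, r k ≤ rhoFin ρ n x y :=
  mul_le_mul_of_nonneg_left (Finset.sum_le_sum fun k _ => h k) (by positivity)

theorem rhoFin_le_add_of_le {r : Fin n → ℝ} {ε : ℝ} (hε : 0 ≤ ε)
    (h : ∀ k, ρ (x k, y k) ≤ r k + ε) :
    rhoFin ρ n x y ≤ (n : ℝ)⁻¹ * ∑ k, r k + ε :=
  calc rhoFin ρ n x y ≤ (n : ℝ)⁻¹ * ∑ k, (r k + ε) :=
        mul_le_mul_of_nonneg_left (Finset.sum_le_sum fun k _ => h k) (by positivity)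
    _ = (n : ℝ)⁻¹ * ∑ k, r k + (n : ℝ)⁻¹ * n * ε := by
        simp [Finset.sum_add_distrib]; ring
    _ ≤ (n : ℝ)⁻¹ * ∑ k, r k + ε := by
        gcongr
        exact mul_le_of_le_one_left hε inv_mul_le_one

variable [MeasurableSpace T]

theorem ae_rhoQ_le {α : Type*} [MeasurableSpace α] {μ : Measure α} {Q : Measure T} {g : α → T}
    (hρ0 : ∀ z, 0 ≤ ρ z) (hg : Measurable g) (hgQ : μ.map g = Q) (s : S) :
    ∀ᵐ a ∂μ, rhoQ ρ Q s ≤ ρ (s, g a) := by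
  subst hgQ
  exact ae_of_ae_map hg.aemeasurable (ae_essInf_le (isBoundedUnder_of ⟨0, fun _ => hρ0 _⟩))

end Distortion

theorem stmt14_general {S T : Type*} [MeasurableSpace S]
    [MeasurableSpace T]
    (ρ : S × T → ℝ) (hρm : Measurable ρ) (hρ0 : ∀ z, 0 ≤ ρ z)
    (𝒬 : Measure (ℕ → T)) [IsProbabilityMeasure 𝒬]
    (hQstat : MeasurePreserving shiftSeq 𝒬 𝒬)
    (Q : Measure T) [IsProbabilityMeasure Q] (hQ1 : 𝒬.map (fun y => y 0) = Q)
    (C : ℝ) (hmix : Mixing 𝒬 C) :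
    ∀ (n : ℕ) (x : Fin n → S),
      essInf (fun y => rhoFin ρ n x y) (margN 𝒬 n) =
        (n : ℝ)⁻¹ * ∑ k, rhoQ ρ Q (x k) := by
  intro n x
  have hcoord : ∀ k : Fin n, (margN 𝒬 n).map (fun v => v k) = Q := fun k => by
    rw [margN_map_eval, map_eval_eq_map_eval_zero hQstat, hQ1]
  refine le_antisymm (le_of_forall_pos_le_add fun ε hε => ?_)
    (le_essInf_of_ae_le _ ?_ (isCoboundedUnder_ge_ae _))
  · set A : Fin n → Set T := fun k => {t | ρ (x k, t) < rhoQ ρ Q (x k) + ε}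
    have hA : ∀ k, MeasurableSet (A k) := fun k =>
      measurableSet_lt (hρm.comp measurable_prodMk_left) measurable_const
    have hQA : ∀ k, Q (A k) ≠ 0 := fun k =>
      frequently_ae_iff.1 (frequently_lt_of_essInf_lt (lt_add_of_pos_right _ hε))
    have hcyl : ∃ᵐ v ∂margN 𝒬 n, v ∈ univ.pi A :=
      frequently_ae_iff.2 (hmix.margN_pi_ne_zero hQstat hQ1 A hA hQA)
    exact liminf_le_of_frequently_le
      (hcyl.mono fun v hv => rhoFin_le_add_of_le ρ hε.le fun k => (hv k trivial).le)
      (isBoundedUnder_of ⟨0, fun _ => rhoFin_nonneg ρ hρ0⟩)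
  · filter_upwards [ae_all_iff.2 fun k => ae_rhoQ_le ρ hρ0 (measurable_pi_apply k) (hcoord k) (x k)]
      with v hv
    exact le_rhoFin_of_le ρ hv

/-- under the mixing condition, for every `n` and every
`x_1^n ∈ S^n`, the essential infimum of `ρ_n(x_1^n, Y_1^n)` under `Q_n` equals
`(1/n) ∑_{k=1}^n ρ_Q(x_k)`. -/
theorem stmt14 {S T : Type*} [MeasurableSpace S] [StandardBorelSpace S]
    [MeasurableSpace T] [StandardBorelSpace T]
    (ρ : S × T → ℝ) (hρm : Measurable ρ) (hρ0 : ∀ z, 0 ≤ ρ z)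
    (𝒬 : Measure (ℕ → T)) [IsProbabilityMeasure 𝒬]
    (hQstat : MeasurePreserving shiftSeq 𝒬 𝒬)
    (Q : Measure T) [IsProbabilityMeasure Q] (hQ1 : 𝒬.map (fun y => y 0) = Q)
    (C : ℝ) (hC : 1 ≤ C) (hmix : Mixing 𝒬 C) :
    ∀ (n : ℕ) (x : Fin n → S),
      essInf (fun y => rhoFin ρ n x y) (margN 𝒬 n) =
        (n : ℝ)⁻¹ * ∑ k, rhoQ ρ Q (x k) :=
  stmt14_general ρ hρm hρ0 𝒬 hQstat Q hQ1 C hmix
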